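/- arXiv:1301.1477 — 4 statements merged into one kernel-verified Lean document; each statement's English description precedes it below -/
import Mathlib

section
/- Let h, k be natural numbers with max(h,k) ≥ 1 and let c be a real number with c < 1 + 1/max(h,k). Then there exists a constant C > 0 such that for every r ∈ (0,1], the Lebesgue measure of the set {(x,y,z) ∈ ℂ³ : |x| < 1, |y| < 1, |x|^h·|y|^k + |z| < r} is at most C·r^(2c). -/
open MeasureTheory

lemma vol_ball3 {a b d : ℝ} (ha : 0 ≤ a) (hb : 0 ≤ b) (hd : 0 ≤ d) :
    volume ((Metric.ball (0:ℂ) a) ×ˢ (Metric.ball (0:ℂ) b) ×ˢ (Metric.ball (0:ℂ) d))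
      = ENNReal.ofReal (Real.pi^3 * (a^2 * b^2 * d^2)) := by
  have factor : ∀ x : ℝ, 0 ≤ x →
      ENNReal.ofReal (x^2 * Real.pi) = ENNReal.ofReal x ^ 2 * NNReal.pi := by
    intro x hx
    rw [ENNReal.ofReal_mul (by positivity), ENNReal.ofReal_pow hx, ← NNReal.coe_real_pi,
      ENNReal.ofReal_coe_nnreal]
  rw [MeasureTheory.Measure.volume_eq_prod, MeasureTheory.Measure.prod_prod,
      MeasureTheory.Measure.volume_eq_prod, MeasureTheory.Measure.prod_prod,
      Complex.volume_ball, Complex.volume_ball, Complex.volume_ball,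
      ← factor a ha, ← factor b hb, ← factor d hd,
      ← ENNReal.ofReal_mul (by positivity), ← ENNReal.ofReal_mul (by positivity)]
  congr 1; ring

lemma memball {w : ℂ} {R : ℝ} (hw : ‖w‖ < R) : w ∈ Metric.ball (0:ℂ) R := by
  simpa [Metric.mem_ball, Complex.dist_eq] using hw

lemma pow_lt_imp {a A : ℝ} {n : ℕ} (ha : 0 ≤ a) (hn : n ≠ 0) (hlt : a^n < A) :
    a < A^(1/(n:ℝ)) := by
  have hn' : (0:ℝ) < (n:ℝ) := by exact_mod_cast Nat.pos_of_ne_zero hn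
  have h0 : (0:ℝ) < 1/(n:ℝ) := by positivity
  have := Real.rpow_lt_rpow (by positivity) hlt h0
  rwa [← Real.rpow_natCast a n, ← Real.rpow_mul ha, mul_one_div, div_self hn'.ne',
    Real.rpow_one] at this

lemma rpow_pow_two {r : ℝ} (hr : 0 ≤ r) (t : ℝ) : (r ^ t)^2 = r ^ (2*t) := by
  rw [← Real.rpow_natCast (r^t) 2, ← Real.rpow_mul hr]
  norm_num [mul_comm]

/-- For `c < 1 + 1/max(h,k)`, the Lebesgue measure of the sublevel set
`{(x,y,z) : |x| < 1, |y| < 1, |x|^h·|y|^k + |z| < r}` is at most `C·r^(2c)` for `r ∈ (0,1]`. -/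
theorem stmt1 (h k : ℕ) (hhk : 1 ≤ max h k) (c : ℝ) (hc : c < 1 + 1 / (max h k : ℝ)) :
    ∃ C : ℝ, 0 < C ∧ ∀ r : ℝ, 0 < r → r ≤ 1 →
      volume {p : ℂ × ℂ × ℂ |
          ‖p.1‖ < 1 ∧ ‖p.2.1‖ < 1 ∧
            ‖p.1‖ ^ h * ‖p.2.1‖ ^ k + ‖p.2.2‖ < r}
        ≤ ENNReal.ofReal (C * r ^ (2 * c)) := by
  have hmpos : (0:ℝ) < (h:ℝ) ⊔ (k:ℝ) := by
    have : ((max h k : ℕ):ℝ) = (h:ℝ) ⊔ (k:ℝ) := by push_cast; rfl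
    rw [← this]; exact_mod_cast hhk
  -- r^2 (as monoid pow) = r^(2:ℝ)
  have hr2 : ∀ r : ℝ, 0 ≤ r → r ^ (2:ℕ) = r ^ ((2:ℝ)) := by
    intro r _; rw [← Real.rpow_natCast r 2]; norm_num
  by_cases hc1 : c ≤ 1
  · -- easy case: bound by unit balls times disk of radius r
    refine ⟨Real.pi^3, by positivity, fun r hr hr1 => ?_⟩
    have hsub : {p : ℂ × ℂ × ℂ |
          ‖p.1‖ < 1 ∧ ‖p.2.1‖ < 1 ∧
            ‖p.1‖ ^ h * ‖p.2.1‖ ^ k + ‖p.2.2‖ < r}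
        ⊆ (Metric.ball (0:ℂ) 1) ×ˢ (Metric.ball (0:ℂ) 1) ×ˢ (Metric.ball (0:ℂ) r) := by
      rintro ⟨x, y, z⟩ ⟨hx, hy, hxyz⟩
      have hz : ‖z‖ < r :=
        lt_of_le_of_lt (le_add_of_nonneg_left (by positivity)) hxyz
      exact ⟨memball hx, memball hy, memball hz⟩
    refine (measure_mono hsub).trans ?_
    rw [vol_ball3 zero_le_one zero_le_one hr.le]
    apply ENNReal.ofReal_le_ofReal
    have : r ^ (2:ℕ) ≤ r ^ (2*c) := by
      rw [hr2 r hr.le]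
      exact Real.rpow_le_rpow_of_exponent_ge hr hr1 (by linarith)
    calc Real.pi^3 * (1^2*1^2*r^2) = Real.pi^3 * r^(2:ℕ) := by ring
      _ ≤ Real.pi^3 * r^(2*c) := mul_le_mul_of_nonneg_left this (by positivity)
  push_neg at hc1
  by_cases hk0 : k = 0
  · -- k = 0 : max h k = h
    subst hk0
    have hh : h = max h 0 := (Nat.max_zero h).symm
    have hh1 : 1 ≤ h := by omega
    have hhpos : (0:ℝ) < (h:ℝ) := by exact_mod_cast hh1
    refine ⟨Real.pi^3, by positivity, fun r hr hr1 => ?_⟩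
    have hsub : {p : ℂ × ℂ × ℂ |
          ‖p.1‖ < 1 ∧ ‖p.2.1‖ < 1 ∧
            ‖p.1‖ ^ h * ‖p.2.1‖ ^ 0 + ‖p.2.2‖ < r}
        ⊆ (Metric.ball (0:ℂ) (r ^ (1/(h:ℝ)))) ×ˢ (Metric.ball (0:ℂ) 1) ×ˢ (Metric.ball (0:ℂ) r) := by
      rintro ⟨x, y, z⟩ ⟨hx, hy, hxyz⟩
      simp only [pow_zero, mul_one] at hxyz
      have hz : ‖z‖ < r :=
        lt_of_le_of_lt (le_add_of_nonneg_left (by positivity)) hxyz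
      have hxh : ‖x‖ ^ h < r :=
        lt_of_le_of_lt (le_add_of_nonneg_right (norm_nonneg z)) hxyz
      exact ⟨memball (pow_lt_imp (norm_nonneg x) (by omega) hxh), memball hy, memball hz⟩
    refine (measure_mono hsub).trans ?_
    rw [vol_ball3 (by positivity) zero_le_one hr.le]
    apply ENNReal.ofReal_le_ofReal
    have key : (r ^ (1/(h:ℝ)))^(2:ℕ) * r^(2:ℕ) ≤ r ^ (2*c) := by
      rw [rpow_pow_two hr.le, hr2 r hr.le, ← Real.rpow_add hr]
      refine Real.rpow_le_rpow_of_exponent_ge hr hr1 ?_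
      have : c < 1 + 1/(h:ℝ) := by
        have e : ((h:ℕ):ℝ) ⊔ ((0:ℕ):ℝ) = (h:ℝ) := by
          simp only [Nat.cast_zero]; exact max_eq_left (Nat.cast_nonneg h)
        rwa [e] at hc
      have h2 : 2*c < 2 + 2*(1/(h:ℝ)) := by linarith
      rw [mul_one_div] at h2 ⊢
      linarith
    calc Real.pi^3 * ((r ^ (1/(h:ℝ)))^2*1^2*r^2)
        = Real.pi^3 * ((r ^ (1/(h:ℝ)))^(2:ℕ) * r^(2:ℕ)) := by ring
      _ ≤ Real.pi^3 * r^(2*c) := mul_le_mul_of_nonneg_left key (by positivity)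
  by_cases hh0 : h = 0
  · -- h = 0 : symmetric
    subst hh0
    have hk : k = max 0 k := (Nat.zero_max k).symm
    have hk1 : 1 ≤ k := by omega
    refine ⟨Real.pi^3, by positivity, fun r hr hr1 => ?_⟩
    have hsub : {p : ℂ × ℂ × ℂ |
          ‖p.1‖ < 1 ∧ ‖p.2.1‖ < 1 ∧
            ‖p.1‖ ^ 0 * ‖p.2.1‖ ^ k + ‖p.2.2‖ < r}
        ⊆ (Metric.ball (0:ℂ) 1) ×ˢ (Metric.ball (0:ℂ) (r ^ (1/(k:ℝ)))) ×ˢ (Metric.ball (0:ℂ) r) := by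
      rintro ⟨x, y, z⟩ ⟨hx, hy, hxyz⟩
      simp only [pow_zero, one_mul] at hxyz
      have hz : ‖z‖ < r :=
        lt_of_le_of_lt (le_add_of_nonneg_left (by positivity)) hxyz
      have hyk : ‖y‖ ^ k < r :=
        lt_of_le_of_lt (le_add_of_nonneg_right (norm_nonneg z)) hxyz
      exact ⟨memball hx, memball (pow_lt_imp (norm_nonneg y) (by omega) hyk), memball hz⟩
    refine (measure_mono hsub).trans ?_
    rw [vol_ball3 zero_le_one (by positivity) hr.le]
    apply ENNReal.ofReal_le_ofReal
    have key : (r ^ (1/(k:ℝ)))^(2:ℕ) * r^(2:ℕ) ≤ r ^ (2*c) := by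
      rw [rpow_pow_two hr.le, hr2 r hr.le, ← Real.rpow_add hr]
      refine Real.rpow_le_rpow_of_exponent_ge hr hr1 ?_
      have : c < 1 + 1/(k:ℝ) := by
        have e : ((0:ℕ):ℝ) ⊔ ((k:ℕ):ℝ) = (k:ℝ) := by
          simp only [Nat.cast_zero]; exact max_eq_right (Nat.cast_nonneg k)
        rwa [e] at hc
      have h2 : 2*c < 2 + 2*(1/(k:ℝ)) := by linarith
      rw [mul_one_div] at h2 ⊢
      linarith
    calc Real.pi^3 * (1^2*(r ^ (1/(k:ℝ)))^2*r^2)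
        = Real.pi^3 * ((r ^ (1/(k:ℝ)))^(2:ℕ) * r^(2:ℕ)) := by ring
      _ ≤ Real.pi^3 * r^(2*c) := mul_le_mul_of_nonneg_left key (by positivity)
  -- main case: h ≥ 1, k ≥ 1, c > 1
  have hh1 : 1 ≤ h := Nat.pos_of_ne_zero hh0
  have hk1 : 1 ≤ k := Nat.pos_of_ne_zero hk0
  have hhpos : (0:ℝ) < (h:ℝ) := by exact_mod_cast hh1
  have hkpos : (0:ℝ) < (k:ℝ) := by exact_mod_cast hk1
  set e : ℝ := 2*c - 2 with he_def
  have he0 : 0 < e := by simp only [he_def]; linarith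
  have hcm : (c - 1) * ((h:ℝ) ⊔ (k:ℝ)) < 1 := by
    have h1 : c - 1 < 1 / ((h:ℝ) ⊔ (k:ℝ)) := by linarith
    calc (c-1) * ((h:ℝ) ⊔ (k:ℝ)) < (1 / ((h:ℝ) ⊔ (k:ℝ))) * ((h:ℝ) ⊔ (k:ℝ)) :=
          mul_lt_mul_of_pos_right h1 hmpos
      _ = 1 := by field_simp
  have hhle : (h:ℝ) ≤ (h:ℝ) ⊔ (k:ℝ) := le_max_left _ _
  have hkle : (k:ℝ) ≤ (h:ℝ) ⊔ (k:ℝ) := le_max_right _ _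
  have heh : e * (h:ℝ) < 2 := by
    have : (c-1) * (h:ℝ) ≤ (c-1) * ((h:ℝ) ⊔ (k:ℝ)) :=
      mul_le_mul_of_nonneg_left hhle (by linarith)
    simp only [he_def]; nlinarith
  have hek : e * (k:ℝ) < 2 := by
    have : (c-1) * (k:ℝ) ≤ (c-1) * ((h:ℝ) ⊔ (k:ℝ)) :=
      mul_le_mul_of_nonneg_left hkle (by linarith)
    simp only [he_def]; nlinarith
  have hek2 : e/2 ≤ 1/(k:ℝ) := by
    rw [div_le_div_iff₀ (by norm_num) hkpos]
    linarith
  set B : ℝ := (2:ℝ) ^ ((h:ℝ) * (e/2)) with hB_def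
  have hB0 : 0 < B := Real.rpow_pos_of_pos (by norm_num) _
  set q : ℝ := B^2 * (2⁻¹:ℝ)^2 with hq_def
  have hq0 : 0 ≤ q := by positivity
  have hq1 : q < 1 := by
    have hB2 : B^2 = (2:ℝ) ^ ((h:ℝ) * e) := by
      rw [hB_def, rpow_pow_two (by norm_num), ← mul_assoc]
      ring_nf
    have h4 : ((2:ℝ) ^ ((h:ℝ) * e)) < 4 := by
      have : ((2:ℝ) ^ ((h:ℝ) * e)) < (2:ℝ) ^ ((2:ℝ)) := by
        apply (Real.rpow_lt_rpow_left_iff (by norm_num)).mpr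
        linarith [heh]
      calc ((2:ℝ) ^ ((h:ℝ) * e)) < (2:ℝ) ^ ((2:ℝ)) := this
        _ = 4 := by rw [← hr2 2 (by norm_num)]; norm_num
    rw [hq_def, hB2]
    nlinarith
  have hq1' : (0:ℝ) < 1 - q := by linarith
  refine ⟨Real.pi^3 * B^2 / (1-q), div_pos (by positivity) hq1', fun r hr hr1 => ?_⟩
  -- the dyadic cover
  set A : ℕ → ℝ := fun n => r * 2^((n+1)*h) with hA_def
  have hApos : ∀ n, 0 < A n := fun n => by positivity
  set R2 : ℕ → ℝ := fun n => r^(e/2) * B^(n+1) with hR2_def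
  have hAB : ∀ n, (A n)^(e/2) = R2 n := by
    intro n
    show (r * 2^((n+1)*h)) ^ (e/2) = r^(e/2) * B^(n+1)
    rw [Real.mul_rpow hr.le (by positivity), ← Real.rpow_natCast (2:ℝ) ((n+1)*h),
      ← Real.rpow_mul (by norm_num), hB_def, ← Real.rpow_natCast ((2:ℝ) ^ ((h:ℝ) * (e/2))) (n+1),
      ← Real.rpow_mul (by norm_num)]
    congr 1
    push_cast
    ring
  set T : ℕ → Set (ℂ × ℂ × ℂ) := fun n =>
    (Metric.ball (0:ℂ) ((2⁻¹:ℝ)^n)) ×ˢ (Metric.ball (0:ℂ) (R2 n)) ×ˢ (Metric.ball (0:ℂ) r)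
    with hT_def
  have hcover : {p : ℂ × ℂ × ℂ |
          ‖p.1‖ < 1 ∧ ‖p.2.1‖ < 1 ∧
            ‖p.1‖ ^ h * ‖p.2.1‖ ^ k + ‖p.2.2‖ < r}
      ⊆ ⋃ n, T n := by
    rintro ⟨x, y, z⟩ ⟨hx, hy, hxyz⟩
    have ha0 : 0 ≤ ‖x‖ := norm_nonneg x
    have hb0 : 0 ≤ ‖y‖ := norm_nonneg y
    have hz : ‖z‖ < r :=
      lt_of_le_of_lt (le_add_of_nonneg_left (by positivity)) hxyz
    have hab : ‖x‖ ^ h * ‖y‖ ^ k < r :=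
      lt_of_le_of_lt (le_add_of_nonneg_right (norm_nonneg z)) hxyz
    -- key step: if b^k < A n then b < R2 n
    have key : ∀ n : ℕ, ‖y‖ ^ k < A n → ‖y‖ < R2 n := by
      intro n hbk
      rw [← hAB n]
      rcases le_or_gt 1 (A n) with h1 | h1
      · exact lt_of_lt_of_le hy (Real.one_le_rpow h1 (by positivity))
      · have hb1 : ‖y‖ < (A n)^(1/(k:ℝ)) := pow_lt_imp hb0 hk0 hbk
        exact hb1.trans_le (Real.rpow_le_rpow_of_exponent_ge (hApos n) h1.le hek2)
    have main : ∃ n, ‖x‖ < (2⁻¹:ℝ)^n ∧ ‖y‖ ^ k < A n := by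
      rcases eq_or_lt_of_le ha0 with ha | ha
      · -- abs x = 0
        obtain ⟨n, hn⟩ := exists_pow_lt_of_lt_one hr (by norm_num : (2⁻¹:ℝ) < 1)
        refine ⟨n, by rw [← ha]; positivity, ?_⟩
        have hbk1 : ‖y‖ ^ k < 1 := pow_lt_one₀ hb0 hy hk0
        have h2n : (2:ℝ)^n ≤ 2^((n+1)*h) := by
          apply pow_le_pow_right₀ (by norm_num)
          calc n ≤ n+1 := Nat.le_succ n
            _ = (n+1)*1 := (mul_one _).symm
            _ ≤ (n+1)*h := Nat.mul_le_mul_left _ hh1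
        have hAn1 : (1:ℝ) < A n := by
          have e1 : (1:ℝ) = (2⁻¹:ℝ)^n * 2^n := by
            rw [← mul_pow]; norm_num
          rw [hA_def]
          calc (1:ℝ) = (2⁻¹:ℝ)^n * 2^n := e1
            _ < r * 2^n := mul_lt_mul_of_pos_right hn (by positivity)
            _ ≤ r * 2^((n+1)*h) := mul_le_mul_of_nonneg_left h2n hr.le
        exact hbk1.trans hAn1
      · -- abs x > 0
        have hP : ∃ n, (2⁻¹:ℝ)^(n+1) ≤ ‖x‖ := by
          obtain ⟨m, hm⟩ := exists_pow_lt_of_lt_one ha (by norm_num : (2⁻¹:ℝ) < 1)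
          exact ⟨m, le_trans (pow_le_pow_of_le_one (by norm_num) (by norm_num)
            (Nat.le_succ m)) hm.le⟩
        classical
        obtain ⟨n, hn1, hmin⟩ : ∃ n, (2⁻¹:ℝ)^(n+1) ≤ ‖x‖ ∧
            ∀ m, m < n → ¬((2⁻¹:ℝ)^(m+1) ≤ ‖x‖) :=
          ⟨Nat.find hP, Nat.find_spec hP, fun m hm => Nat.find_min hP hm⟩
        have hn2 : ‖x‖ < (2⁻¹:ℝ)^n := by
          rcases Nat.eq_zero_or_pos n with h0 | hpos
          · rw [h0]; simpa using hx
          · obtain ⟨n', hn'⟩ := Nat.exists_eq_succ_of_ne_zero hpos.ne'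
            have hm := hmin n' (by omega)
            push_neg at hm
            rw [hn']
            exact hm
        refine ⟨n, hn2, ?_⟩
        have h2 : (2⁻¹:ℝ)^((n+1)*h) ≤ ‖x‖ ^ h := by
          rw [pow_mul]; exact pow_le_pow_left₀ (by positivity) hn1 h
        have h3 : (2⁻¹:ℝ)^((n+1)*h) * ‖y‖ ^ k < r :=
          lt_of_le_of_lt (mul_le_mul_of_nonneg_right h2 (by positivity)) hab
        have e2 : ‖y‖ ^ k
            = (2:ℝ)^((n+1)*h) * ((2⁻¹:ℝ)^((n+1)*h) * ‖y‖ ^ k) := by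
          rw [← mul_assoc, ← mul_pow]; norm_num
        rw [hA_def]
        calc ‖y‖ ^ k
            = (2:ℝ)^((n+1)*h) * ((2⁻¹:ℝ)^((n+1)*h) * ‖y‖ ^ k) := e2
          _ < (2:ℝ)^((n+1)*h) * r := mul_lt_mul_of_pos_left h3 (by positivity)
          _ = r * 2^((n+1)*h) := mul_comm _ _
    obtain ⟨n, hxn, hbn⟩ := main
    exact Set.mem_iUnion.mpr ⟨n, memball hxn, memball (key n hbn), memball hz⟩
  refine (measure_mono hcover).trans ((measure_iUnion_le T).trans ?_)
  -- sum the geometric series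
  set K : ℝ := Real.pi^3 * B^2 * r^(2*c) with hK_def
  have hK0 : 0 ≤ K := by positivity
  have hvol : ∀ n, volume (T n) = ENNReal.ofReal (K * q^n) := by
    intro n
    rw [hT_def]
    simp only
    rw [vol_ball3 (by positivity) (by positivity : (0:ℝ) ≤ R2 n) hr.le]
    congr 1
    rw [hR2_def]
    simp only
    have hre : (r^(e/2) * B^(n+1))^2 = r^e * (B^2)^(n+1) := by
      rw [mul_pow, rpow_pow_two hr.le]
      ring_nf
    have hrc : r^e * r^(2:ℕ) = r^(2*c) := by
      rw [hr2 r hr.le, ← Real.rpow_add hr]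
      congr 1
      simp only [he_def]; ring
    have hp2 : ((2⁻¹:ℝ)^n)^2 = ((2⁻¹:ℝ)^2)^n := by
      rw [← pow_mul, ← pow_mul, Nat.mul_comm]
    calc Real.pi^3 * (((2⁻¹:ℝ)^n)^2 * (r^(e/2) * B^(n+1))^2 * r^2)
        = Real.pi^3 * (((2⁻¹:ℝ)^2)^n * (r^e * ((B^2)^n * B^2)) * r^2) := by
          rw [hre, hp2, pow_succ (B^2) n]
      _ = (Real.pi^3 * B^2 * (r^e * r^(2:ℕ))) * ((B^2)^n * ((2⁻¹:ℝ)^2)^n) := by ring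
      _ = K * q^n := by rw [hrc, hK_def, hq_def, mul_pow]
  have hsummable : Summable (fun n : ℕ => K * q^n) :=
    (summable_geometric_of_lt_one hq0 hq1).mul_left K
  calc ∑' n, volume (T n) = ∑' n, ENNReal.ofReal (K * q^n) := by
        exact tsum_congr hvol
    _ = ENNReal.ofReal (∑' n, K * q^n) :=
        (ENNReal.ofReal_tsum_of_nonneg (fun n => by positivity) hsummable).symm
    _ = ENNReal.ofReal (K * (1-q)⁻¹) := by
        rw [tsum_mul_left, tsum_geometric_of_lt_one hq0 hq1]
    _ ≤ ENNReal.ofReal (Real.pi^3 * B^2 / (1-q) * r^(2*c)) := by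
        apply le_of_eq
        rw [hK_def]
        congr 1
        ring
end

section
/- Let h, k be natural numbers with max(h,k) ≥ 1. Then r^(−2) times the Lebesgue measure of the set {(x,y,z) ∈ ℂ³ : |x| < 1, |y| < 1, |x|^h·|y|^k + |z| < r} tends to 0 as r → 0⁺. -/
open MeasureTheory Filter

/-- `r⁻² ·` (Lebesgue measure of `{(x,y,z) : |x| < 1, |y| < 1, |x|^h·|y|^k + |z| < r}`)
tends to `0` as `r → 0⁺`. -/
theorem stmt2 (h k : ℕ) (hhk : 1 ≤ max h k) :
    Tendsto
      (fun r : ℝ =>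
        r ^ (-2 : ℝ) *
          (volume {p : ℂ × ℂ × ℂ |
              ‖p.1‖ < 1 ∧ ‖p.2.1‖ < 1 ∧
                ‖p.1‖ ^ h * ‖p.2.1‖ ^ k + ‖p.2.2‖ < r}).toReal)
      (nhdsWithin 0 (Set.Ioi 0)) (nhds 0) := by
  set A : ℝ → Set (ℂ × ℂ) := fun r =>
    {q : ℂ × ℂ | ‖q.1‖ < 1 ∧ ‖q.2‖ < 1 ∧
      ‖q.1‖ ^ h * ‖q.2‖ ^ k < r} with hA
  set S : ℝ → Set (ℂ × ℂ × ℂ) := fun r =>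
    {p : ℂ × ℂ × ℂ | ‖p.1‖ < 1 ∧ ‖p.2.1‖ < 1 ∧
      ‖p.1‖ ^ h * ‖p.2.1‖ ^ k + ‖p.2.2‖ < r} with hS
  -- measurability of A r
  have hAmeas : ∀ r : ℝ, MeasurableSet (A r) := by
    intro r
    apply MeasurableSet.inter
    · exact measurableSet_lt (continuous_norm.comp continuous_fst).measurable
        measurable_const
    apply MeasurableSet.inter
    · exact measurableSet_lt (continuous_norm.comp continuous_snd).measurable
        measurable_const
    · exact measurableSet_lt (((continuous_norm.comp continuous_fst).pow _).mul
        ((continuous_norm.comp continuous_snd).pow _)).measurable measurable_const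
  -- A is monotone
  have hAmono : ∀ ⦃r r' : ℝ⦄, r ≤ r' → A r ⊆ A r' := by
    intro r r' hrr q hq
    exact ⟨hq.1, hq.2.1, lt_of_lt_of_le hq.2.2 hrr⟩
  -- A r has finite measure
  have hAfin : ∀ r : ℝ, volume (A r) ≠ ⊤ := by
    intro r
    have hsub : A r ⊆ Metric.ball (0 : ℂ) 1 ×ˢ Metric.ball (0 : ℂ) 1 := by
      intro q hq
      constructor
      · simpa [Complex.dist_eq] using hq.1
      · simpa [Complex.dist_eq] using hq.2.1
    refine ne_of_lt (lt_of_le_of_lt (measure_mono hsub) ?_)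
    rw [Measure.volume_eq_prod, Measure.prod_prod]
    exact ENNReal.mul_lt_top (measure_ball_lt_top : volume (Metric.ball (0:ℂ) 1) < ⊤) (measure_ball_lt_top : volume (Metric.ball (0:ℂ) 1) < ⊤)
  -- intersection of the A (1/(n+1)) is null
  have hinter : volume (⋂ n : ℕ, A ((n + 1 : ℝ)⁻¹)) = 0 := by
    have hsub : (⋂ n : ℕ, A ((n + 1 : ℝ)⁻¹)) ⊆
        {q : ℂ × ℂ | q.1 = 0} ∪ {q : ℂ × ℂ | q.2 = 0} := by
      intro q hq
      simp only [Set.mem_iInter] at hq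
      have hle : ‖q.1‖ ^ h * ‖q.2‖ ^ k ≤ 0 := by
        by_contra hpos
        push_neg at hpos
        obtain ⟨n, hn⟩ := exists_nat_one_div_lt hpos
        have := (hq n).2.2
        rw [one_div] at hn
        exact absurd this (not_lt.2 hn.le)
      have h0 : ‖q.1‖ ^ h * ‖q.2‖ ^ k = 0 :=
        le_antisymm hle (by positivity)
      rcases mul_eq_zero.1 h0 with h1 | h1
      · left
        rcases pow_eq_zero_iff'.1 h1 with ⟨ha, -⟩
        exact norm_eq_zero.1 ha
      · right
        rcases pow_eq_zero_iff'.1 h1 with ⟨ha, -⟩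
        exact norm_eq_zero.1 ha
    refine measure_mono_null hsub (measure_union_null ?_ ?_)
    · have he : {q : ℂ × ℂ | q.1 = 0} = ({0} : Set ℂ) ×ˢ (Set.univ : Set ℂ) := by
        ext ⟨a, b⟩; simp [Set.mem_prod, eq_comm]
      rw [he, Measure.volume_eq_prod, Measure.prod_prod]
      simp
    · have he : {q : ℂ × ℂ | q.2 = 0} = (Set.univ : Set ℂ) ×ˢ ({0} : Set ℂ) := by
        ext ⟨a, b⟩; simp [Set.mem_prod, eq_comm]
      rw [he, Measure.volume_eq_prod, Measure.prod_prod]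
      simp
  -- sequential continuity from above
  have hseq : Tendsto (fun n : ℕ => volume (A ((n + 1 : ℝ)⁻¹))) atTop (nhds 0) := by
    have := tendsto_measure_iInter_atTop
      (μ := volume) (s := fun n : ℕ => A ((n + 1 : ℝ)⁻¹))
      (fun n => (hAmeas _).nullMeasurableSet)
      (fun m n hmn => hAmono (by
        have : (m : ℝ) + 1 ≤ (n : ℝ) + 1 := by exact_mod_cast by omega
        exact inv_anti₀ (by positivity) this))
      ⟨0, hAfin _⟩
    rwa [hinter] at this
  -- filter version for r → 0⁺
  have hAten : Tendsto (fun r : ℝ => volume (A r)) (nhdsWithin 0 (Set.Ioi 0)) (nhds 0) := by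
    rw [ENNReal.tendsto_nhds_zero]
    intro ε hε
    rcases (ENNReal.tendsto_nhds_zero.1 hseq ε hε).exists with ⟨n, hn⟩
    have hmem : Set.Ioo (0 : ℝ) ((n + 1 : ℝ)⁻¹) ∈ nhdsWithin (0 : ℝ) (Set.Ioi 0) :=
      Ioo_mem_nhdsGT_of_mem ⟨le_refl 0, by positivity⟩
    filter_upwards [hmem] with r hr
    exact le_trans (measure_mono (hAmono hr.2.le)) hn
  have hAtenR : Tendsto (fun r : ℝ => (volume (A r)).toReal)
      (nhdsWithin 0 (Set.Ioi 0)) (nhds 0) := by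
    have := (ENNReal.tendsto_toReal (a := 0) (by simp)).comp hAten
    exact this
  -- the key volume bound
  have hbound : ∀ r : ℝ, 0 < r →
      volume (S r) ≤ volume (A r) * (ENNReal.ofReal r ^ 2 * NNReal.pi) := by
    intro r hr
    have hsub : S r ⊆ MeasurableEquiv.prodAssoc '' (A r ×ˢ Metric.ball (0 : ℂ) r) := by
      rintro ⟨x, y, z⟩ hp
      obtain ⟨h1, h2, h3⟩ := hp
      have hz : (0 : ℝ) ≤ ‖z‖ := norm_nonneg z
      have hxy : (0 : ℝ) ≤ ‖x‖ ^ h * ‖y‖ ^ k := by positivity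
      refine ⟨((x, y), z), ⟨⟨h1, h2, by linarith⟩, ?_⟩, rfl⟩
      simpa [Complex.dist_eq] using show ‖z‖ < r by linarith
    have himg : volume (MeasurableEquiv.prodAssoc '' (A r ×ˢ Metric.ball (0 : ℂ) r))
        = volume (A r ×ˢ Metric.ball (0 : ℂ) r) := by
      rw [MeasurableEquiv.image_eq_preimage_symm]
      exact (volume_preserving_prodAssoc.symm _).measure_preimage
        (((hAmeas r).prod measurableSet_ball).nullMeasurableSet)
    calc volume (S r) ≤ volume (MeasurableEquiv.prodAssoc '' (A r ×ˢ Metric.ball (0 : ℂ) r)) :=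
          measure_mono hsub
      _ = volume (A r ×ˢ Metric.ball (0 : ℂ) r) := himg
      _ = volume (A r) * volume (Metric.ball (0 : ℂ) r) := by
          rw [Measure.volume_eq_prod, Measure.prod_prod]
      _ = volume (A r) * (ENNReal.ofReal r ^ 2 * NNReal.pi) := by
          rw [Complex.volume_ball]
  -- squeeze
  have hg : Tendsto (fun r : ℝ => Real.pi * (volume (A r)).toReal)
      (nhdsWithin 0 (Set.Ioi 0)) (nhds 0) := by
    simpa using hAtenR.const_mul Real.pi
  refine squeeze_zero' ?_ ?_ hg
  · filter_upwards [self_mem_nhdsWithin] with r (hr : 0 < r)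
    have : (0 : ℝ) ≤ r ^ (-2 : ℝ) := Real.rpow_nonneg hr.le _
    positivity
  · filter_upwards [self_mem_nhdsWithin] with r (hr : 0 < r)
    have hST : (volume (S r)).toReal ≤ (volume (A r)).toReal * (r ^ 2 * Real.pi) := by
      have h1 := hbound r hr
      have h2 : (volume (A r) * (ENNReal.ofReal r ^ 2 * NNReal.pi)).toReal
          = (volume (A r)).toReal * (r ^ 2 * Real.pi) := by
        rw [ENNReal.toReal_mul, ENNReal.toReal_mul, ENNReal.toReal_pow,
          ENNReal.toReal_ofReal hr.le, ENNReal.coe_toReal, NNReal.coe_real_pi]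
      rw [← h2]
      refine ENNReal.toReal_mono ?_ h1
      exact ENNReal.mul_ne_top (hAfin r) (ENNReal.mul_ne_top (ENNReal.pow_ne_top ENNReal.ofReal_ne_top) ENNReal.coe_ne_top)
    have hrpow : r ^ (-2 : ℝ) = (r ^ 2)⁻¹ := by
      rw [Real.rpow_neg hr.le, ← Real.rpow_natCast r 2]
      norm_num
    have hr2 : (0 : ℝ) < r ^ 2 := by positivity
    calc r ^ (-2 : ℝ) * (volume (S r)).toReal
        ≤ (r ^ 2)⁻¹ * ((volume (A r)).toReal * (r ^ 2 * Real.pi)) := by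
          rw [hrpow]
          exact mul_le_mul_of_nonneg_left hST (by positivity)
      _ = Real.pi * (volume (A r)).toReal := by
          field_simp
end

section
/- Let n ≥ 1, let 0 ≤ p ≤ n, and let α₁, …, αₙ be real numbers with αᵢ ≤ 1 for all i. Suppose that exactly p of the αᵢ are negative (i.e. there is a subset S of {1,…,n} of cardinality p with αᵢ < 0 for i ∈ S and αᵢ ≥ 0 for i ∉ S). Then (−1)^p · α₁⋯αₙ ≤ e_p(1−α₁, …, 1−αₙ), where e_p denotes the p-th elementary symmetric polynomial in n variables. -/
/-- If `αᵢ ≤ 1` for all `i` and exactly `p` of the `αᵢ` are negative, then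
`(−1)^p · α₁⋯αₙ ≤ e_p(1−α₁, …, 1−αₙ)`. -/
theorem stmt8 (n : ℕ) (hn : 1 ≤ n) (p : ℕ) (hp : p ≤ n)
    (α : Fin n → ℝ) (hα : ∀ i, α i ≤ 1)
    (S : Finset (Fin n)) (hS : S.card = p)
    (hneg : ∀ i ∈ S, α i < 0) (hpos : ∀ i ∉ S, 0 ≤ α i) :
    (-1 : ℝ) ^ p * ∏ i, α i ≤
      ((Finset.univ.val.map fun i : Fin n => 1 - α i)).esymm p := by
  set f : Fin n → ℝ := fun i => 1 - α i with hf
  -- Step 1: ∏_{i∈S} f i ≤ esymm p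
  have hterm : (S.val.map f) ∈ (Finset.univ.val.map f).powersetCard p := by
    rw [Multiset.mem_powersetCard]
    constructor
    · exact Multiset.map_le_map (Finset.val_le_iff.mpr (Finset.subset_univ S))
    · simp [hS]
  have hesymm : (∏ i ∈ S, f i) ≤ (Finset.univ.val.map f).esymm p := by
    rw [Multiset.esymm]
    have : (S.val.map f).prod ∈ ((Finset.univ.val.map f).powersetCard p).map Multiset.prod :=
      Multiset.mem_map_of_mem _ hterm
    refine le_trans (le_of_eq ?_) (Multiset.single_le_sum ?_ _ this)
    · rfl
    · intro x hx
      obtain ⟨t, ht, rfl⟩ := Multiset.mem_map.mp hx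
      rw [Multiset.mem_powersetCard] at ht
      refine Multiset.prod_nonneg ?_
      intro y hy
      have := Multiset.mem_of_le ht.1 hy
      obtain ⟨i, _, rfl⟩ := Multiset.mem_map.mp this
      have := hα i
      simp [hf]; linarith
  -- Step 2: ∏_{i∈S} (-α i) ≤ ∏_{i∈S} f i
  have h2 : (∏ i ∈ S, (-α i)) ≤ ∏ i ∈ S, f i := by
    refine Finset.prod_le_prod ?_ ?_
    · intro i hi; linarith [hneg i hi]
    · intro i hi; simp only [hf]; linarith
  -- Step 3: (-1)^p ∏ all = ∏_S (-α) * ∏_{Sᶜ} α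
  have hsplit : (-1 : ℝ) ^ p * ∏ i, α i = (∏ i ∈ S, (-α i)) * ∏ i ∈ Sᶜ, α i := by
    have h1 : ∏ i ∈ S, (-α i) = (-1 : ℝ) ^ p * ∏ i ∈ S, α i := by
      rw [← hS]
      rw [show (fun i => -α i) = fun i => (-1 : ℝ) * α i from funext fun i => by ring,
        Finset.prod_mul_distrib, Finset.prod_const]
    rw [h1, ← Finset.prod_mul_prod_compl S α]
    ring
  have hc1 : (∏ i ∈ Sᶜ, α i) ≤ 1 := by
    refine Finset.prod_le_one ?_ ?_
    · intro i hi; exact hpos i (Finset.mem_compl.mp hi)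
    · intro i hi; exact hα i
  have hc0 : 0 ≤ ∏ i ∈ Sᶜ, α i :=
    Finset.prod_nonneg fun i hi => hpos i (Finset.mem_compl.mp hi)
  have hs0 : 0 ≤ ∏ i ∈ S, (-α i) :=
    Finset.prod_nonneg fun i hi => by linarith [hneg i hi]
  calc (-1 : ℝ) ^ p * ∏ i, α i = (∏ i ∈ S, (-α i)) * ∏ i ∈ Sᶜ, α i := hsplit
    _ ≤ (∏ i ∈ S, (-α i)) * 1 := by exact mul_le_mul_of_nonneg_left hc1 hs0
    _ = ∏ i ∈ S, (-α i) := mul_one _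
    _ ≤ ∏ i ∈ S, f i := h2
    _ ≤ _ := hesymm
end

section
/- Let n ≥ 1, let 0 ≤ p ≤ n, and let α₁, …, αₙ be real numbers with αᵢ ≤ 1 for all i. If at most p of the αᵢ are negative, then (−1)^p · α₁⋯αₙ ≤ Σ_{j=0}^{p} (−1)^{p−j} · e_j(1−α₁, …, 1−αₙ), where e_j denotes the j-th elementary symmetric polynomial in n variables. -/
lemma my_esymm_cons (a : ℝ) (s : Multiset ℝ) (j : ℕ) :
    (a ::ₘ s).esymm (j+1) = s.esymm (j+1) + a * s.esymm j := by
  simp only [Multiset.esymm, Multiset.powersetCard_cons, Multiset.map_add, Multiset.sum_add,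
    Multiset.map_map, Function.comp_def, Multiset.prod_cons, Multiset.sum_map_mul_left]

lemma my_esymm_zero (s : Multiset ℝ) : s.esymm 0 = 1 := by simp [Multiset.esymm]

lemma my_esymm_empty (j : ℕ) (hj : j ≠ 0) : (0 : Multiset ℝ).esymm j = 0 := by
  cases j with
  | zero => exact absurd rfl hj
  | succ k => simp [Multiset.esymm, Multiset.powersetCard_zero_right, Multiset.powersetCard_cons]

/-- products of factors in [0,1] -/
lemma my_prod01 (s : Multiset ℝ) (h : ∀ b ∈ s, 0 ≤ b ∧ b ≤ 1) :
    0 ≤ s.prod ∧ s.prod ≤ 1 := by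
  induction s using Multiset.induction with
  | empty => simp
  | cons a t ih =>
    have ha := h a (Multiset.mem_cons_self a t)
    have ih' := ih (fun b hb => h b (Multiset.mem_cons_of_mem hb))
    rw [Multiset.prod_cons]
    constructor
    · exact mul_nonneg ha.1 ih'.1
    · calc a * t.prod ≤ 1 * 1 := by
            apply mul_le_mul ha.2 ih'.2 ih'.1 zero_le_one
        _ = 1 := one_mul 1

lemma my_key (s : Multiset ℝ) : ∀ (p : ℕ),
    (∀ b ∈ s, 0 ≤ b) → (s.countP (fun b => 1 < b)) ≤ p →
    (-1 : ℝ) ^ p * (s.map (fun b => 1 - b)).prod ≤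
      ∑ j ∈ Finset.range (p + 1), (-1 : ℝ) ^ (p - j) * s.esymm j := by
  induction s using Multiset.strongInductionOn with
  | ih s IH =>
  intro p h0 hc
  rcases Multiset.empty_or_exists_mem s with rfl | ⟨a, ha⟩
  · -- empty multiset: equality
    rw [Finset.sum_eq_single 0]
    · simp [my_esymm_zero]
    · intro j hj hj0
      rw [my_esymm_empty j hj0, mul_zero]
    · intro h
      exact absurd (Finset.mem_range.mpr (Nat.succ_pos p)) h
  · cases p with
    | zero =>
      -- all elements ≤ 1, product in [0,1]
      have hall : ∀ b ∈ s, b ≤ 1 := by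
        intro b hb
        by_contra hb1
        push_neg at hb1
        have : 0 < s.countP (fun b => 1 < b) :=
          Multiset.countP_pos.mpr ⟨b, hb, hb1⟩
        omega
      have := my_prod01 (s.map (fun b => 1 - b)) ?_
      · simpa [my_esymm_zero] using this.2
      · intro b hb
        obtain ⟨c, hc', rfl⟩ := Multiset.mem_map.mp hb
        constructor
        · linarith [hall c hc']
        · linarith [h0 c hc']
    | succ q =>
      -- choose a to peel: an element > 1 if one exists, else any
      obtain ⟨a, ha, hacount⟩ :
          ∃ a ∈ s, Multiset.countP (fun b => 1 < b) (s.erase a) ≤ q := by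
        by_cases hex : ∃ a ∈ s, 1 < a
        · obtain ⟨a, ha, ha1⟩ := hex
          refine ⟨a, ha, ?_⟩
          have : s = a ::ₘ s.erase a := (Multiset.cons_erase ha).symm
          rw [this, Multiset.countP_cons, if_pos ha1] at hc
          omega
        · push_neg at hex
          refine ⟨a, ha, ?_⟩
          have : Multiset.countP (fun b => 1 < b) (s.erase a) = 0 := by
            rw [Multiset.countP_eq_zero]
            intro b hb
            exact not_lt.mpr (hex b (Multiset.mem_of_mem_erase hb))
          omega
      set t := s.erase a with ht
      have hst : s = a ::ₘ t := (Multiset.cons_erase ha).symm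
      have hts : t < s := by rw [hst]; exact Multiset.lt_cons_self t a
      have h0t : ∀ b ∈ t, 0 ≤ b := fun b hb => h0 b (Multiset.mem_of_mem_erase hb)
      have hctq1 : t.countP (fun b => 1 < b) ≤ q + 1 := le_trans hacount (Nat.le_succ q)
      have IH1 := IH t hts (q+1) h0t hctq1
      have IH2 := IH t hts q h0t hacount
      have ha0 : 0 ≤ a := h0 a ha
      -- RHS identity
      have hrhs : ∑ j ∈ Finset.range (q + 2), (-1 : ℝ) ^ (q + 1 - j) * s.esymm j
          = (∑ j ∈ Finset.range (q + 2), (-1 : ℝ) ^ (q + 1 - j) * t.esymm j)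
            + a * ∑ j ∈ Finset.range (q + 1), (-1 : ℝ) ^ (q - j) * t.esymm j := by
        rw [hst]
        rw [Finset.mul_sum]
        rw [Finset.sum_range_succ' _ (q+1), Finset.sum_range_succ' _ (q+1)]
        have hterm : ∀ k ∈ Finset.range (q+1),
            (-1:ℝ)^(q+1-(k+1)) * (a ::ₘ t).esymm (k+1)
            = (-1:ℝ)^(q+1-(k+1)) * t.esymm (k+1) + a * ((-1:ℝ)^(q-k) * t.esymm k) := by
          intro k _
          rw [my_esymm_cons]
          have h1 : q + 1 - (k + 1) = q - k := by omega
          rw [h1]; ring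
        rw [Finset.sum_congr rfl hterm, Finset.sum_add_distrib,
          my_esymm_zero (a ::ₘ t), my_esymm_zero t]
        ring
      -- LHS identity
      have hlhs : (-1 : ℝ) ^ (q+1) * (s.map (fun b => 1 - b)).prod
          = (-1 : ℝ) ^ (q+1) * (t.map (fun b => 1 - b)).prod
            + a * ((-1 : ℝ) ^ q * (t.map (fun b => 1 - b)).prod) := by
        rw [hst, Multiset.map_cons, Multiset.prod_cons]
        ring
      rw [hlhs, hrhs]
      exact add_le_add IH1 (mul_le_mul_of_nonneg_left IH2 ha0)

/-- If `αᵢ ≤ 1` for all `i` and at most `p` of the `αᵢ` are negative, then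
`(−1)^p · α₁⋯αₙ ≤ Σ_{j=0}^{p} (−1)^{p−j} · e_j(1−α₁, …, 1−αₙ)`. -/
theorem stmt9 (n : ℕ) (hn : 1 ≤ n) (p : ℕ) (hp : p ≤ n)
    (α : Fin n → ℝ) (hα : ∀ i, α i ≤ 1)
    (hneg : (Finset.univ.filter fun i : Fin n => α i < 0).card ≤ p) :
    (-1 : ℝ) ^ p * ∏ i, α i ≤
      ∑ j ∈ Finset.range (p + 1),
        (-1 : ℝ) ^ (p - j) * ((Finset.univ.val.map fun i : Fin n => 1 - α i)).esymm j := by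
  set s : Multiset ℝ := Finset.univ.val.map fun i : Fin n => 1 - α i with hs
  have h0 : ∀ b ∈ s, 0 ≤ b := by
    intro b hb
    obtain ⟨i, _, rfl⟩ := Multiset.mem_map.mp hb
    linarith [hα i]
  have hcount : s.countP (fun b => 1 < b) ≤ p := by
    rw [hs, Multiset.countP_map]
    have heq : Multiset.filter (fun a : Fin n => 1 < 1 - α a) Finset.univ.val
        = Multiset.filter (fun i : Fin n => α i < 0) Finset.univ.val := by
      apply Multiset.filter_congr
      intro i _
      constructor <;> intro <;> linarith
    rw [heq]
    exact hneg
  have hprod : ∏ i, α i = (s.map (fun b => 1 - b)).prod := by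
    rw [hs, Multiset.map_map]
    simp [Function.comp_def, Finset.prod]
  rw [hprod]
  exact my_key s p h0 hcount
end
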